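/- Let V be a finite-dimensional complex inner product space and D_x, D_y mutually adjoint endomorphisms with D_x² = D_y² = 0, and D = D_x + D_y. Then im(D_x) + im(D_y) = im(D) = im(D²), and V decomposes as the orthogonal direct sum V = ker(D²) ⊕ im(D_x) ⊕ im(D_y). -/

import Mathlib

open scoped ComplexInnerProductSpace

/-!
Since `D_y` is the adjoint of `A := D_x`, everything is a statement about a square-zero operator
`A` on a finite-dimensional inner product space and the self-adjoint operator `D = A + A†`.
For self-adjoint `D` one has `ker D² = ker D` and `im D² = im D = (ker D)ᗮ`. From `A² = 0` one
gets `ker D = ker A ∩ ker A† = (im A + im A†)ᗮ` (if `Dv = 0` then `AA†v = ADv = 0`, so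
`A†v = 0`), so `im A + im A† = im D`, and `im A ≤ ker A` makes `im A` orthogonal to `im A†`.
-/

open Submodule

namespace LinearMap

variable {𝕜 E : Type*} [RCLike 𝕜] [NormedAddCommGroup E] [InnerProductSpace 𝕜 E]
  [FiniteDimensional 𝕜 E]

theorem ker_comp_self_of_adjoint_eq {T : E →ₗ[𝕜] E} (hT : T.adjoint = T) :
    ker (T ∘ₗ T) = ker T := by
  rw [← ker_adjoint_comp_self T, hT]

theorem range_comp_self_of_adjoint_eq {T : E →ₗ[𝕜] E} (hT : T.adjoint = T) :
    range (T ∘ₗ T) = range T := by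
  rw [← range_self_comp_adjoint T, hT]

theorem adjoint_add_adjoint_self (A : E →ₗ[𝕜] E) : (A + A.adjoint).adjoint = A + A.adjoint := by
  rw [map_add, adjoint_adjoint, add_comm]

variable {A : E →ₗ[𝕜] E}

theorem ker_add_adjoint_of_comp_self_eq_zero (hA : A ∘ₗ A = 0) :
    ker (A + A.adjoint) = ker A ⊓ ker A.adjoint := by
  refine le_antisymm (fun v hv => ?_) (fun v ⟨hAv, hA'v⟩ => by simp_all)
  have hsum : A v + A.adjoint v = 0 := hv
  have hA'v : v ∈ ker A.adjoint := by
    rw [← ker_self_comp_adjoint, mem_ker, comp_apply]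
    have h := congr_arg A hsum
    rwa [map_add, ← comp_apply A A, hA, zero_apply, zero_add, map_zero] at h
  exact ⟨by simpa [mem_ker.1 hA'v] using hsum, hA'v⟩

theorem orthogonal_range_sup_range_adjoint_of_comp_self_eq_zero (hA : A ∘ₗ A = 0) :
    (range A ⊔ range A.adjoint)ᗮ = ker (A + A.adjoint) := by
  rw [← inf_orthogonal, orthogonal_range, orthogonal_range, adjoint_adjoint, inf_comm,
    ker_add_adjoint_of_comp_self_eq_zero hA]

theorem range_sup_range_adjoint_of_comp_self_eq_zero (hA : A ∘ₗ A = 0) :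
    range A ⊔ range A.adjoint = range (A + A.adjoint) := by
  rw [← orthogonal_orthogonal (range A ⊔ range A.adjoint),
    orthogonal_range_sup_range_adjoint_of_comp_self_eq_zero hA, orthogonal_ker,
    adjoint_add_adjoint_self]

theorem isOrtho_range_range_adjoint_of_comp_self_eq_zero (hA : A ∘ₗ A = 0) :
    range A ⟂ range A.adjoint := by
  rw [isOrtho_iff_le, orthogonal_range, adjoint_adjoint]
  exact range_le_ker_iff.2 hA

end LinearMap

open LinearMap in
theorem stmt3_general (V : Type*) [NormedAddCommGroup V] [InnerProductSpace ℂ V]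
    [FiniteDimensional ℂ V]
    (Dx Dy : V →ₗ[ℂ] V)
    (hadj : ∀ v w : V, ⟪Dx v, w⟫ = ⟪v, Dy w⟫)
    (hx2 : Dx ∘ₗ Dx = 0)
    (D : V →ₗ[ℂ] V) (hD : D = Dx + Dy) :
    LinearMap.range Dx ⊔ LinearMap.range Dy = LinearMap.range D ∧
    LinearMap.range D = LinearMap.range (D ∘ₗ D) ∧
    (∀ v ∈ LinearMap.ker (D ∘ₗ D), ∀ w ∈ LinearMap.range Dx, ⟪v, w⟫ = 0) ∧
    (∀ v ∈ LinearMap.ker (D ∘ₗ D), ∀ w ∈ LinearMap.range Dy, ⟪v, w⟫ = 0) ∧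
    (∀ v ∈ LinearMap.range Dx, ∀ w ∈ LinearMap.range Dy, ⟪v, w⟫ = 0) ∧
    LinearMap.ker (D ∘ₗ D) ⊔ LinearMap.range Dx ⊔ LinearMap.range Dy = ⊤ := by
  obtain rfl : Dy = Dx.adjoint := by rw [(eq_adjoint_iff Dx Dy).2 hadj, adjoint_adjoint]
  subst hD
  have hK : ker ((Dx + Dx.adjoint) ∘ₗ (Dx + Dx.adjoint)) = (range Dx ⊔ range Dx.adjoint)ᗮ := by
    rw [ker_comp_self_of_adjoint_eq (adjoint_add_adjoint_self Dx),
      orthogonal_range_sup_range_adjoint_of_comp_self_eq_zero hx2]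
  refine ⟨range_sup_range_adjoint_of_comp_self_eq_zero hx2,
    (range_comp_self_of_adjoint_eq (adjoint_add_adjoint_self Dx)).symm, ?_, ?_,
    isOrtho_iff_inner_eq.1 (isOrtho_range_range_adjoint_of_comp_self_eq_zero hx2), ?_⟩
  · rw [hK]
    exact isOrtho_iff_inner_eq.1 ((isOrtho_orthogonal_left _).mono_right le_sup_left)
  · rw [hK]
    exact isOrtho_iff_inner_eq.1 ((isOrtho_orthogonal_left _).mono_right le_sup_right)
  · rw [hK, sup_assoc, sup_comm, sup_orthogonal_of_hasOrthogonalProjection]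

/-- images identity and orthogonal decomposition
`V = ker(D²) ⊕ im Dx ⊕ im Dy`. -/
theorem stmt3 (V : Type*) [NormedAddCommGroup V] [InnerProductSpace ℂ V]
    [FiniteDimensional ℂ V]
    (Dx Dy : V →ₗ[ℂ] V)
    (hadj : ∀ v w : V, ⟪Dx v, w⟫ = ⟪v, Dy w⟫)
    (hx2 : Dx ∘ₗ Dx = 0) (hy2 : Dy ∘ₗ Dy = 0)
    (D : V →ₗ[ℂ] V) (hD : D = Dx + Dy) :
    LinearMap.range Dx ⊔ LinearMap.range Dy = LinearMap.range D ∧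
    LinearMap.range D = LinearMap.range (D ∘ₗ D) ∧
    (∀ v ∈ LinearMap.ker (D ∘ₗ D), ∀ w ∈ LinearMap.range Dx, ⟪v, w⟫ = 0) ∧
    (∀ v ∈ LinearMap.ker (D ∘ₗ D), ∀ w ∈ LinearMap.range Dy, ⟪v, w⟫ = 0) ∧
    (∀ v ∈ LinearMap.range Dx, ∀ w ∈ LinearMap.range Dy, ⟪v, w⟫ = 0) ∧
    LinearMap.ker (D ∘ₗ D) ⊔ LinearMap.range Dx ⊔ LinearMap.range Dy = ⊤ :=
  stmt3_general V Dx Dy hadj hx2 D hD
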